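/- Let M = [[A, X], [X*, B]] be a 2n×2n positive semi-definite matrix in n×n blocks, where X is normal, X* commutes with A, and X commutes with B. Then ‖M‖ ≤ ‖A + B‖ for every unitarily invariant norm (identifying A+B with (A+B) ⊕ 0). -/

import Mathlib

open Matrix ComplexOrder

/-!
Since `X` is normal, some unitary function `Φ` of `X` makes `XΦ = |X|` Hermitian, and by
Fuglede's theorem `Φ` commutes with `B`. With `F± = [[1, 0], [±iΦ, 0]]` one gets
`F±* M F± = (A + B) ⊕ 0` and `F₊F₊* + F₋F₋* = 2`. Writing `M = S²` with `S ≥ 0` and `K± = S F±`,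
this gives `2M = K₊K₊* + K₋K₋*` while `K±*K± = (A + B) ⊕ 0`. Since `KK*` and `K*K` are unitarily
similar, `M` is the average of two unitary conjugates of `(A + B) ⊕ 0`.
-/

theorem IsStarNormal.exists_unitary_isSelfAdjoint_mul_commute {A : Type*} [CStarAlgebra A]
    {a b : A} [IsStarNormal a] (hfin : (spectrum ℂ a).Finite) (hab : Commute a b) :
    ∃ u ∈ unitary A, IsSelfAdjoint (a * u) ∧ Commute u b := by
  set g : ℂ → ℂ := fun z ↦ if z = 0 then 1 else star z / ‖z‖
  have hg : ∀ f : ℂ → ℂ, ContinuousOn f (spectrum ℂ a) := hfin.continuousOn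
  refine ⟨cfc g a, ?_, ?_, hab.cfc (IsStarNormal.commute_star_left ‹_› hab) g⟩
  · rw [cfc_unitary_iff g a (hf := hg g)]
    intro z _
    by_cases hz : z = 0
    · simp [g, hz]
    · have : (‖z‖ : ℂ) ≠ 0 := by simpa using hz
      simp only [g, hz, if_false, star_div₀, RCLike.star_def, Complex.conj_conj,
        Complex.conj_ofReal]
      rw [div_mul_div_comm, Complex.mul_conj', div_eq_one_iff_eq (mul_ne_zero this this), sq]
  · have : a * cfc g a = cfc (fun z ↦ (‖z‖ : ℂ)) a := by
      nth_rw 1 [← cfc_id' ℂ a]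
      rw [← cfc_mul _ _ a (hg _) (hg _)]
      refine cfc_congr fun z _ ↦ ?_
      by_cases hz : z = 0
      · simp [g, hz]
      · have : (‖z‖ : ℂ) ≠ 0 := by simpa using hz
        simp only [g, hz, if_false, RCLike.star_def]
        rw [mul_div_assoc', Complex.mul_conj', div_eq_iff this, sq]
    rw [this, IsSelfAdjoint, ← cfc_star]
    simp

namespace Matrix

section Blocks

variable {m k : Type*} [Fintype m] [Fintype k] [DecidableEq m] [DecidableEq k]

theorem fromBlocks_one_zero_mul_conjTranspose_add (Ψ : Matrix k m ℂ) (hΨ : Ψ * Ψᴴ = 1) :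
    fromBlocks 1 0 Ψ 0 * (fromBlocks 1 0 Ψ 0)ᴴ
      + fromBlocks 1 0 (-Ψ) 0 * (fromBlocks 1 0 (-Ψ) 0)ᴴ
      = (2 : ℂ) • (1 : Matrix (m ⊕ k) (m ⊕ k) ℂ) := by
  simp [fromBlocks_conjTranspose, fromBlocks_multiply, fromBlocks_add, hΨ, ← fromBlocks_one,
    two_smul]

theorem conjTranspose_fromBlocks_one_zero_mul_mul (A : Matrix m m ℂ) (X : Matrix m k ℂ)
    (B : Matrix k k ℂ) (Ψ : Matrix k m ℂ) :
    (fromBlocks 1 0 Ψ 0)ᴴ * fromBlocks A X Xᴴ B * fromBlocks 1 0 Ψ 0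
      = fromBlocks (A + (X * Ψ + (X * Ψ)ᴴ) + Ψᴴ * B * Ψ) 0 0 (0 : Matrix k k ℂ) := by
  simp only [fromBlocks_conjTranspose, conjTranspose_one, conjTranspose_zero, fromBlocks_multiply,
    one_mul, Matrix.one_mul, Matrix.zero_mul, add_zero, zero_mul, mul_one, Matrix.add_mul,
    Matrix.mul_assoc, Matrix.mul_zero, Matrix.mul_one, mul_zero, conjTranspose_mul, fromBlocks_inj,
    and_self, and_true]
  abel

end Blocks

variable {m : Type*} [Fintype m] [DecidableEq m]

open scoped Matrix.Norms.L2Operator in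
theorem exists_unitary_isHermitian_mul_commute {X B : Matrix m m ℂ} (hX : X * Xᴴ = Xᴴ * X)
    (hXB : Commute X B) : ∃ Φ ∈ unitaryGroup m ℂ, (X * Φ).IsHermitian ∧ Commute Φ B :=
  have : IsStarNormal X := ⟨hX.symm⟩
  IsStarNormal.exists_unitary_isSelfAdjoint_mul_commute X.finite_spectrum hXB

theorem conjTranspose_fromBlocks_smul_mul_mul {A B X Φ : Matrix m m ℂ}
    (hΦ : Φ ∈ unitaryGroup m ℂ) (hXΦ : (X * Φ).IsHermitian) (hΦB : Commute Φ B) {s : ℂ}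
    (hs : star s = -s) (hs₁ : star s * s = 1) :
    (fromBlocks 1 0 (s • Φ) 0)ᴴ * fromBlocks A X Xᴴ B * fromBlocks 1 0 (s • Φ) 0
      = fromBlocks (A + B) 0 0 0 := by
  have hΦBΦ : Φᴴ * B * Φ = B := by
    rw [mul_assoc, ← hΦB.eq, ← mul_assoc, ← star_eq_conjTranspose, mem_unitaryGroup_iff'.mp hΦ,
      one_mul]
  have hskew : X * (s • Φ) + (X * (s • Φ))ᴴ = 0 := by
    rw [Matrix.mul_smul, conjTranspose_smul, hXΦ.eq, hs, neg_smul, add_neg_cancel]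
  have hB : (s • Φ)ᴴ * B * (s • Φ) = B := by
    simp only [conjTranspose_smul, smul_mul_assoc, Matrix.mul_smul, smul_smul, hs₁, one_smul, hΦBΦ]
  rw [conjTranspose_fromBlocks_one_zero_mul_mul, hskew, hB, add_zero]

theorem IsHermitian.exists_unitary_eq_mul_mul_star_of_charpoly_eq {A B : Matrix m m ℂ}
    (hA : A.IsHermitian) (hB : B.IsHermitian) (h : A.charpoly = B.charpoly) :
    ∃ U ∈ unitaryGroup m ℂ, A = U * B * star U := by
  set V : Matrix m m ℂ := ↑hA.eigenvectorUnitary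
  set W : Matrix m m ℂ := ↑hB.eigenvectorUnitary
  have hAB : hA.eigenvalues = hB.eigenvalues := (hA.eigenvalues_eq_eigenvalues_iff hB).mpr h
  refine ⟨V * star W, mul_mem (SetLike.coe_mem _) (Unitary.star_mem (SetLike.coe_mem _)), ?_⟩
  calc A = V * diagonal (RCLike.ofReal ∘ hB.eigenvalues) * star V := by
        rw [← hAB]; exact hA.spectral_theorem
    _ = V * (star W * B * W) * star V := by
        rw [← hB.conjStarAlgAut_star_eigenvectorUnitary, Unitary.conjStarAlgAut_star_apply]
    _ = V * star W * B * star (V * star W) := by simp only [star_mul, star_star, mul_assoc]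

theorem exists_unitary_mul_conjTranspose_eq (K : Matrix m m ℂ) :
    ∃ U ∈ unitaryGroup m ℂ, K * Kᴴ = U * (Kᴴ * K) * star U :=
  (isHermitian_mul_conjTranspose_self K).exists_unitary_eq_mul_mul_star_of_charpoly_eq
    (isHermitian_conjTranspose_mul_self K) (charpoly_mul_comm _ _)

open scoped MatrixOrder in
theorem PosSemidef.exists_unitary_smul_eq_sum {ι : Type*} [Fintype ι] {M : Matrix m m ℂ}
    (hM : M.PosSemidef) (F : ι → Matrix m m ℂ) {c : ℂ} (hF : ∑ i, F i * (F i)ᴴ = c • 1) :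
    ∃ U : ι → unitaryGroup m ℂ,
      c • M = ∑ i, (U i : Matrix m m ℂ) * ((F i)ᴴ * M * F i) * star (U i : Matrix m m ℂ) := by
  set S := CFC.sqrt M
  have hS : Sᴴ = S := (nonneg_iff_posSemidef.mp (CFC.sqrt_nonneg M)).1
  have hSS : S * S = M := CFC.sqrt_mul_sqrt_self M (nonneg_iff_posSemidef.mpr hM)
  choose U hU hK using fun i ↦ exists_unitary_mul_conjTranspose_eq (S * F i)
  refine ⟨fun i ↦ ⟨U i, hU i⟩, ?_⟩
  calc c • M = S * (c • 1) * S := by rw [mul_smul_comm, mul_one, smul_mul_assoc, hSS]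
    _ = ∑ i, S * F i * (S * F i)ᴴ := by
        simp only [← hF, Finset.mul_sum, Finset.sum_mul, conjTranspose_mul, hS, mul_assoc]
    _ = _ := by
        refine Finset.sum_congr rfl fun i _ ↦ ?_
        rw [hK, ← hSS, conjTranspose_mul, hS]
        simp only [mul_assoc]

theorem PosSemidef.norm_mul_le_sum_of_sum_mul_conjTranspose_eq {f : Matrix m m ℂ → ℝ}
    (hf_smul : ∀ (c : ℂ) T, f (c • T) = ‖c‖ * f T) (hf_add : ∀ S T, f (S + T) ≤ f S + f T)
    (hf_inv : ∀ (T : Matrix m m ℂ) (U V : unitaryGroup m ℂ),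
      f ((U : Matrix m m ℂ) * T * (V : Matrix m m ℂ)) = f T)
    {ι : Type*} [Fintype ι] {M : Matrix m m ℂ} (hM : M.PosSemidef) (F : ι → Matrix m m ℂ)
    {c : ℂ} (hF : ∑ i, F i * (F i)ᴴ = c • 1) :
    ‖c‖ * f M ≤ ∑ i, f ((F i)ᴴ * M * F i) := by
  obtain ⟨U, hU⟩ := hM.exists_unitary_smul_eq_sum F hF
  have hf_zero : f 0 = 0 := by simpa using hf_smul 0 0
  rw [← hf_smul, hU]
  refine (Finset.le_sum_of_subadditive f hf_zero.le hf_add _ _).trans_eq ?_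
  exact Finset.sum_congr rfl fun i _ ↦ hf_inv _ (U i) (star (U i))

end Matrix

theorem norm_le_of_normal_comm_general (n : ℕ)
    (A B X : Matrix (Fin n) (Fin n) ℂ)
    (hX : X * Xᴴ = Xᴴ * X)
    (hM : (fromBlocks A X Xᴴ B).PosSemidef)
    (hcommB : X * B = B * X)
    (f : Matrix (Fin n ⊕ Fin n) (Fin n ⊕ Fin n) ℂ → ℝ)
    (hf_smul : ∀ (c : ℂ) T, f (c • T) = ‖c‖ * f T)
    (hf_add : ∀ S T, f (S + T) ≤ f S + f T)
    (hf_inv : ∀ (T : Matrix (Fin n ⊕ Fin n) (Fin n ⊕ Fin n) ℂ)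
      (U V : Matrix.unitaryGroup (Fin n ⊕ Fin n) ℂ),
      f ((U : Matrix _ _ ℂ) * T * (V : Matrix _ _ ℂ)) = f T) :
    f (fromBlocks A X Xᴴ B) ≤ f (fromBlocks (A + B) 0 0 0) := by
  obtain ⟨Φ, hΦ, hXΦ, hΦB⟩ := exists_unitary_isHermitian_mul_commute hX hcommB
  have hIΦ : (Complex.I • Φ) * (Complex.I • Φ)ᴴ = 1 := by
    rw [conjTranspose_smul, smul_mul_smul_comm, ← star_eq_conjTranspose,
      mem_unitaryGroup_iff.mp hΦ]
    simp
  have hF := fromBlocks_one_zero_mul_conjTranspose_add (Complex.I • Φ) hIΦ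
  rw [← neg_smul] at hF
  have := hM.norm_mul_le_sum_of_sum_mul_conjTranspose_eq hf_smul hf_add hf_inv
    ![fromBlocks 1 0 (Complex.I • Φ) 0, fromBlocks 1 0 ((-Complex.I) • Φ) 0]
    (by simpa [Fin.sum_univ_two] using hF)
  simp only [Fin.sum_univ_two, Matrix.cons_val_zero, Matrix.cons_val_one] at this
  rw [conjTranspose_fromBlocks_smul_mul_mul hΦ hXΦ hΦB (by simp) (by simp),
    conjTranspose_fromBlocks_smul_mul_mul hΦ hXΦ hΦB (by simp) (by simp), Complex.norm_two] at this
  linarith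

theorem norm_le_of_normal_comm (n : ℕ)
    (A B X : Matrix (Fin n) (Fin n) ℂ)
    (hX : X * Xᴴ = Xᴴ * X)
    (hM : (fromBlocks A X Xᴴ B).PosSemidef)
    (hcommA : Xᴴ * A = A * Xᴴ)
    (hcommB : X * B = B * X)
    (f : Matrix (Fin n ⊕ Fin n) (Fin n ⊕ Fin n) ℂ → ℝ)
    (hf_nonneg : ∀ T, 0 ≤ f T)
    (hf_smul : ∀ (c : ℂ) T, f (c • T) = ‖c‖ * f T)
    (hf_add : ∀ S T, f (S + T) ≤ f S + f T)
    (hf_inv : ∀ (T : Matrix (Fin n ⊕ Fin n) (Fin n ⊕ Fin n) ℂ)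
      (U V : Matrix.unitaryGroup (Fin n ⊕ Fin n) ℂ),
      f ((U : Matrix _ _ ℂ) * T * (V : Matrix _ _ ℂ)) = f T) :
    f (fromBlocks A X Xᴴ B) ≤ f (fromBlocks (A + B) 0 0 0) :=
  norm_le_of_normal_comm_general n A B X hX hM hcommB f hf_smul hf_add hf_inv
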